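/- arXiv:1508.00622 — 6 statements merged into one kernel-verified Lean document; each statement's English description precedes it below -/
import Mathlib

section
/- Let V be a finite-dimensional vector space with basis S = {s_1,…,s_n}, and let 𝒱 be a collection of subspaces of V such that each member of 𝒱 is spanned by a subset of S. Then H_k(V,𝒱) = 0 for all k ≥ 1. -/
namespace Arrangement

variable (K : Type) [Field K] (V : Type) [AddCommGroup V] [Module K V]
variable (n : ℕ) (𝒱 : Fin n → Submodule K V)

/-- The index type for the degree `k` chain module: `k`-element subsets of `Fin n`. -/
abbrev Idx (k : ℕ) := {J : Finset (Fin n) // J.card = k}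

/-- The degree `k` chain module of the subspace-arrangement chain complex: the direct sum
over all `k`-element subsets `J` of the intersections `⋂_{j ∈ J} 𝒱 j`.
(For `k = 0` this is canonically `V` itself, as the infimum over the empty set is `⊤`.) -/
abbrev Ck (k : ℕ) : Type _ := (J : Idx n k) → ↥(⨅ j ∈ J.1, 𝒱 j)

/-- The boundary map `C (k+1) → C k`, the alternating (signed) sum of the inclusion maps
obtained by deleting one member of the index set at a time. -/
noncomputable def bd (k : ℕ) : Ck K V n 𝒱 (k + 1) →ₗ[K] Ck K V n 𝒱 k :=
  LinearMap.pi fun J =>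
    ∑ j ∈ (Finset.univ.filter fun j => j ∉ J.1).attach,
      ((-1 : K) ^ (J.1.filter fun i => i < j.1).card) •
        ((Submodule.inclusion
            (le_iInf₂ fun i hi => iInf₂_le i (Finset.mem_insert_of_mem hi))).comp
          (LinearMap.proj (φ := fun J : Idx n (k+1) => ↥(⨅ j ∈ J.1, 𝒱 j))
            (⟨insert j.1 J.1, by
              have hj : j.1 ∉ J.1 := (Finset.mem_filter.mp j.2).2
              rw [Finset.card_insert_of_notMem hj, J.2]⟩ : Idx n (k + 1))))

/-- The cycles in degree `k`: everything in degree `0`, the kernel of the boundary map in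
positive degrees. -/
noncomputable def Zk : (k : ℕ) → Submodule K (Ck K V n 𝒱 k)
  | 0 => ⊤
  | (k + 1) => LinearMap.ker (bd K V n 𝒱 k)

/-- The degree `k` homology of the subspace arrangement: cycles modulo boundaries. -/
abbrev Hk (k : ℕ) : Type _ :=
  ↥(Zk K V n 𝒱 k) ⧸
    Submodule.comap (Zk K V n 𝒱 k).subtype (LinearMap.range (bd K V n 𝒱 k))

end Arrangement

namespace Arrangement

open Finset

section Aux

variable {K : Type} [Field K] {V : Type} [AddCommGroup V] [Module K V]
variable {d n : ℕ} {𝒱 : Fin n → Submodule K V}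

noncomputable def coord (b : Module.Basis (Fin d) K V) (k : ℕ) (x : Ck K V n 𝒱 k) (e : Fin d)
    (S : Finset (Fin n)) : K :=
  if h : S.card = k then b.repr ((x ⟨S, h⟩ : V)) e else 0

lemma coord_eq (b : Module.Basis (Fin d) K V) (k : ℕ) (x : Ck K V n 𝒱 k) (e : Fin d)
    {S : Finset (Fin n)} (h : S.card = k) :
    coord b k x e S = b.repr ((x ⟨S, h⟩ : V)) e := dif_pos h

lemma repr_bd (b : Module.Basis (Fin d) K V) (k : ℕ) (x : Ck K V n 𝒱 (k+1)) (J : Idx n k)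
    (e : Fin d) :
    b.repr ((bd K V n 𝒱 k x J : V)) e =
      ∑ j ∈ Finset.univ.filter (fun j => j ∉ J.1),
        (-1:K) ^ (J.1.filter fun i => i < j).card * coord b (k+1) x e (insert j J.1) := by
  rw [bd]
  rw [← Finset.sum_attach (Finset.univ.filter fun j => j ∉ J.1)
    (fun j => (-1:K) ^ (J.1.filter fun i => i < j).card * coord b (k+1) x e (insert j J.1))]
  simp only [LinearMap.pi_apply, LinearMap.sum_apply, LinearMap.smul_apply,
    LinearMap.comp_apply, LinearMap.proj_apply, AddSubmonoidClass.coe_finset_sum,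
    SetLike.val_smul, map_sum, map_smul, Finsupp.coe_finset_sum, Finset.sum_apply,
    Finsupp.coe_smul, Pi.smul_apply, smul_eq_mul]
  refine Finset.sum_congr rfl fun j hj => ?_
  have hjJ : j.1 ∉ J.1 := (Finset.mem_filter.mp j.2).2
  have pf : (insert j.1 J.1).card = k + 1 := by
    rw [Finset.card_insert_of_notMem hjJ, J.2]
  refine congrArg (fun t => (-1:K) ^ (J.1.filter fun i => i < j.1).card * t) ?_
  rw [coord_eq b (k+1) x e pf, Submodule.coe_inclusion]

lemma sgn_key {A : Finset (Fin n)} {j m : Fin n} (hm : m ∉ A) (hj : j ∉ A) (hjm : j ≠ m) :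
    (-1:K) ^ ((insert m A).filter fun i => i < j).card *
      (-1:K) ^ ((insert j A).filter fun i => i < m).card =
    -((-1:K) ^ (A.filter fun i => i < m).card * (-1:K) ^ (A.filter fun i => i < j).card) := by
  rw [filter_insert, filter_insert]
  rcases lt_or_gt_of_ne hjm with h | h
  · rw [if_neg (not_lt.mpr h.le), if_pos h,
      card_insert_of_notMem (fun hc => hj (mem_filter.mp hc).1), pow_succ]
    ring
  · rw [if_pos h, if_neg (not_lt.mpr h.le),
      card_insert_of_notMem (fun hc => hm (mem_filter.mp hc).1), pow_succ]
    ring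

lemma neg_one_sq_pow (c : ℕ) : (-1:K) ^ c * (-1:K) ^ c = 1 := by
  rw [← pow_add]; exact Even.neg_one_pow ⟨c, rfl⟩

/-- The set of indices `i` whose subspace contains the basis direction `e`. -/
noncomputable def Se (T : Fin n → Set (Fin d)) (e : Fin d) : Finset (Fin n) :=
  @Finset.filter _ (fun i => e ∈ T i) (Classical.decPred _) Finset.univ

lemma mem_Se {T : Fin n → Set (Fin d)} {e : Fin d} {i : Fin n} :
    i ∈ Se T e ↔ e ∈ T i := by
  classical
  simp [Se]

lemma mem_T_of_coord_ne (b : Module.Basis (Fin d) K V) {T : Fin n → Set (Fin d)}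
    (hT : ∀ i, 𝒱 i = Submodule.span K (b '' T i)) (k : ℕ) (x : Ck K V n 𝒱 k) (e : Fin d)
    (S : Finset (Fin n)) (h : coord b k x e S ≠ 0) : ∀ j ∈ S, e ∈ T j := by
  rw [coord] at h
  split at h
  · rename_i hc
    intro j hj
    have hx := (x ⟨S, hc⟩).2
    rw [Submodule.mem_iInf] at hx
    have hx' := hx j
    rw [Submodule.mem_iInf] at hx'
    have := hx' hj
    rw [hT j, Module.Basis.mem_span_image] at this
    exact this (Finsupp.mem_support_iff.mpr h)
  · exact absurd rfl h

end Aux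

/-- If `V` is a finite-dimensional vector space with basis `b` and every member of `𝒱`
is spanned by a subset of the basis, then the arrangement homology `H_k(V, 𝒱)` vanishes
for all `k ≥ 1`. -/
theorem homology_trivial_of_coordinate_subspaces (K : Type) [Field K] (V : Type)
    [AddCommGroup V] [Module K V] (d : ℕ) (b : Module.Basis (Fin d) K V)
    (n : ℕ) (𝒱 : Fin n → Submodule K V)
    (hb : ∀ i, ∃ T : Set (Fin d), 𝒱 i = Submodule.span K (b '' T)) :
    ∀ k, 1 ≤ k → Subsingleton (Hk K V n 𝒱 k) := by
  choose T hT using hb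
  rintro k hk
  obtain ⟨k, rfl⟩ : ∃ k', k = k' + 1 := ⟨k - 1, (Nat.succ_pred_eq_of_pos hk).symm⟩
  apply Submodule.Quotient.subsingleton_iff.mpr
  rw [Submodule.eq_top_iff']
  rintro ⟨z, hz⟩
  have hz0 : bd K V n 𝒱 k z = 0 := by
    simpa [Zk, LinearMap.mem_ker] using hz
  simp only [Submodule.mem_comap, Submodule.subtype_apply, LinearMap.mem_range]
  -- the cycle condition in coordinates
  have hcyc : ∀ (A : Idx n k) (e : Fin d),
      ∑ j ∈ Finset.univ.filter (fun j => j ∉ A.1),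
        (-1:K) ^ (A.1.filter fun i => i < j).card * coord b (k+1) z e (insert j A.1) = 0 := by
    intro A e
    rw [← repr_bd, hz0]
    simp
  -- the homotopy coefficients
  set coeff : Finset (Fin n) → Fin d → K := fun S e =>
    if h : (Se T e).Nonempty then
      (if (Se T e).min' h ∈ S then
        (-1:K) ^ (((S.erase ((Se T e).min' h)).filter
            fun i => i < (Se T e).min' h).card) *
          coord b (k+1) z e (S.erase ((Se T e).min' h))
      else 0)
    else 0 with hcoeff
  -- the homotopy chain
  have wmem : ∀ J' : Idx n (k+2), (∑ e, coeff J'.1 e • b e) ∈ ⨅ j ∈ J'.1, 𝒱 j := by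
    intro J'
    rw [Submodule.mem_iInf]
    intro j
    rw [Submodule.mem_iInf]
    intro hj
    rw [hT j, Module.Basis.mem_span_image]
    intro e he
    rw [Finset.mem_coe, Finsupp.mem_support_iff, Module.Basis.repr_sum_self] at he
    -- he : coeff J'.1 e ≠ 0
    rw [hcoeff] at he
    simp only at he
    split at he
    · rename_i hne
      split at he
      · rename_i hmem
        have hz' := mem_T_of_coord_ne b hT (k+1) z e _ (by
          intro hc
          rw [hc, mul_zero] at he
          exact he rfl)
        rcases eq_or_ne j ((Se T e).min' hne) with rfl | hne'
        · exact mem_Se.mp ((Se T e).min'_mem hne)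
        · exact hz' j (Finset.mem_erase.mpr ⟨hne', hj⟩)
      · exact absurd rfl he
    · exact absurd rfl he
  refine ⟨fun J' => ⟨∑ e, coeff J'.1 e • b e, wmem J'⟩, ?_⟩
  -- coordinates of the homotopy chain
  have hcw : ∀ (e : Fin d) (S : Finset (Fin n)) (h : S.card = k + 2),
      coord b (k+2) (fun J' => (⟨∑ e, coeff J'.1 e • b e, wmem J'⟩ :
          ↥(⨅ j ∈ J'.1, 𝒱 j))) e S = coeff S e := by
    intro e S h
    rw [coord_eq (h := h)]
    exact congrFun (b.repr_sum_self fun e' => coeff S e') e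
  funext J
  apply Subtype.ext
  apply b.ext_elem
  intro e
  rw [repr_bd]
  rw [← coord_eq b (k+1) z e J.2]
  have hins : ∀ j ∈ Finset.univ.filter (fun j => j ∉ J.1), (insert j J.1).card = k + 2 := by
    intro j hj
    rw [Finset.card_insert_of_notMem (Finset.mem_filter.mp hj).2, J.2]
  rw [Finset.sum_congr rfl fun j hj => by rw [hcw e _ (hins j hj)]]
  by_cases hne : (Se T e).Nonempty
  · set m := (Se T e).min' hne with hm
    simp only [hcoeff, dif_pos hne, ← hm]
    by_cases hmJ : m ∈ J.1
    · -- case B1 : the apex is already in J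
      set A := J.1.erase m with hA
      have hmA : m ∉ A := Finset.notMem_erase _ _
      have hAcard : A.card = k := by
        rw [hA, Finset.card_erase_of_mem hmJ, J.2]; rfl
      have hJA : J.1 = insert m A := (Finset.insert_erase hmJ).symm
      have hfil : Finset.univ.filter (fun j => j ∉ A) =
          insert m (Finset.univ.filter (fun j => j ∉ J.1)) := by
        ext j
        simp only [Finset.mem_filter, Finset.mem_univ, true_and, Finset.mem_insert, hA,
          Finset.mem_erase, not_and]
        constructor
        · intro h
          by_cases hj : j = m
          · exact Or.inl hj
          · exact Or.inr fun hc => (h hj) hc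
        · rintro (rfl | h)
          · intro hc; exact absurd rfl hc
          · intro _ hc; exact h hc
      have hmnot : m ∉ Finset.univ.filter (fun j => j ∉ J.1) := by
        simp [hmJ]
      have hcycA := hcyc ⟨A, hAcard⟩ e
      rw [hfil, Finset.sum_insert hmnot] at hcycA
      have hJins : insert m A = J.1 := hJA.symm
      rw [hJins] at hcycA
      have hcoe : ((⟨A, hAcard⟩ : Idx n k) : Finset (Fin n)) = A := rfl
      rw [hcoe] at hcycA
      have hsum : ∑ j ∈ Finset.univ.filter (fun j => j ∉ J.1),
          (-1:K) ^ (A.filter fun i => i < j).card * coord b (k+1) z e (insert j A) =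
          -((-1:K) ^ (A.filter fun i => i < m).card * coord b (k+1) z e J.1) := by
        linear_combination hcycA
      have hterm : ∀ j ∈ Finset.univ.filter (fun j => j ∉ J.1),
          (-1:K) ^ (J.1.filter fun i => i < j).card *
            (if m ∈ insert j J.1 then
              (-1:K) ^ ((((insert j J.1).erase m).filter fun i => i < m).card) *
                coord b (k+1) z e ((insert j J.1).erase m)
            else 0) =
          -((-1:K) ^ (A.filter fun i => i < m).card) *
            ((-1:K) ^ (A.filter fun i => i < j).card * coord b (k+1) z e (insert j A)) := by
        intro j hj
        have hjJ : j ∉ J.1 := (Finset.mem_filter.mp hj).2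
        have hjm : j ≠ m := fun hc => hjJ (hc ▸ hmJ)
        rw [if_pos (Finset.mem_insert_of_mem hmJ),
          Finset.erase_insert_of_ne hjm, ← hA]
        have hjA : j ∉ A := fun hc => hjJ (Finset.mem_of_mem_erase hc)
        have := sgn_key (K := K) hmA hjA hjm
        rw [hJA]
        calc (-1:K) ^ ((insert m A).filter fun i => i < j).card *
              ((-1:K) ^ (((insert j A).filter fun i => i < m).card) *
                coord b (k+1) z e (insert j A))
            = ((-1:K) ^ ((insert m A).filter fun i => i < j).card *
              (-1:K) ^ (((insert j A).filter fun i => i < m).card)) *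
                coord b (k+1) z e (insert j A) := by ring
          _ = _ := by rw [this]; ring
      rw [Finset.sum_congr rfl hterm, ← Finset.mul_sum, hsum]
      have hsq := neg_one_sq_pow (K := K) ((A.filter fun i => i < m).card)
      calc -((-1:K) ^ (A.filter fun i => i < m).card) *
            -((-1:K) ^ (A.filter fun i => i < m).card * coord b (k+1) z e J.1)
          = ((-1:K) ^ (A.filter fun i => i < m).card *
              (-1:K) ^ (A.filter fun i => i < m).card) * coord b (k+1) z e J.1 := by ring
        _ = coord b (k+1) z e J.1 := by rw [hsq, one_mul]
    · -- case B2 : the apex is not in J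
      have hmfil : m ∈ Finset.univ.filter (fun j => j ∉ J.1) := by simp [hmJ]
      rw [Finset.sum_eq_single_of_mem m hmfil]
      · rw [if_pos (Finset.mem_insert_self m J.1), Finset.erase_insert hmJ]
        calc (-1:K) ^ (J.1.filter fun i => i < m).card *
              ((-1:K) ^ ((J.1.filter fun i => i < m).card) * coord b (k+1) z e J.1)
            = ((-1:K) ^ (J.1.filter fun i => i < m).card *
                (-1:K) ^ (J.1.filter fun i => i < m).card) * coord b (k+1) z e J.1 := by ring
          _ = coord b (k+1) z e J.1 := by
              rw [neg_one_sq_pow, one_mul]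
      · intro j hj hjm
        have hjJ : j ∉ J.1 := (Finset.mem_filter.mp hj).2
        rw [if_neg, mul_zero]
        intro hc
        rcases Finset.mem_insert.mp hc with hc | hc
        · exact hjm hc.symm
        · exact hmJ hc
  · -- case A : no subspace contains the direction e; both sides vanish
    have hz' : coord b (k+1) z e J.1 = 0 := by
      by_contra h
      have hmem := mem_T_of_coord_ne b hT (k+1) z e J.1 h
      have hJne : J.1.Nonempty := Finset.card_pos.mp (by rw [J.2]; omega)
      obtain ⟨j, hj⟩ := hJne
      exact hne ⟨j, mem_Se.mpr (hmem j hj)⟩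
    rw [hz']
    refine Finset.sum_eq_zero fun j hj => ?_
    simp only [hcoeff]
    rw [dif_neg hne, mul_zero]
end Arrangement
end

section
/- Let Γ be a finite simple graph and let a, b be nonadjacent vertices. Then every connected component K of Γ − st(a) other than the component containing b satisfies K ∩ st(b) = ∅, and K is contained in a single connected component of Γ − st(b); moreover K is either contained in the component of Γ − st(b) containing a (a 'subordinate' component) or K itself is a connected component of Γ − st(b) (a 'shared' component). -/
namespace RaagPaper

variable {α : Type}

/-- The (closed) star of a vertex: the vertex together with its neighbors. -/
def star (Γ : SimpleGraph α) (a : α) : Set α := insert a (Γ.neighborSet a)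

/-- `K` is (the vertex set of) a connected component of the induced subgraph of `Γ` on
the complement of the vertex set `s`. -/
def IsCompOutside (Γ : SimpleGraph α) (s : Set α) (K : Set α) : Prop :=
  ∃ c : (Γ.induce sᶜ).ConnectedComponent, K = Subtype.val '' c.supp

/-- `K` is (the vertex set of) a connected component of `Γ − st(a)`. -/
def IsCompOf (Γ : SimpleGraph α) (a : α) (K : Set α) : Prop :=
  IsCompOutside Γ (star Γ a) K

/-- `M` is a shared component for the pair `(a, b)`: a common connected component of
both `Γ − st(a)` and `Γ − st(b)`, containing neither `a` nor `b`. -/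
def Shared (Γ : SimpleGraph α) (a b : α) (M : Set α) : Prop :=
  IsCompOf Γ a M ∧ IsCompOf Γ b M ∧ a ∉ M ∧ b ∉ M

end RaagPaper

namespace RaagPaper

lemma mem_star_iff {Γ : SimpleGraph α} {a x : α} : x ∈ star Γ a ↔ x = a ∨ Γ.Adj a x := by
  simp [star]

lemma reachable_of_mem_support {β : Type} {G : SimpleGraph β} :
    ∀ {u v w : β} (W : G.Walk u v), w ∈ W.support → G.Reachable u w := by
  intro u v w W
  induction W with
  | nil => intro h; simp at h; subst h; exact SimpleGraph.Reachable.refl _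
  | cons ha p ih =>
    intro h
    rw [SimpleGraph.Walk.support_cons, List.mem_cons] at h
    rcases h with rfl | h
    · exact SimpleGraph.Reachable.refl _
    · exact ha.reachable.trans (ih h)

lemma reachable_transfer {Γ : SimpleGraph α} {s t : Set α} :
    ∀ {u v : ↥s} (W : (Γ.induce s).Walk u v),
    (∀ x ∈ W.support, (x : ↥s).val ∈ t) →
    ∀ (hu : (u:α) ∈ t) (hv : (v:α) ∈ t),
    (Γ.induce t).Reachable ⟨u, hu⟩ ⟨v, hv⟩ := by
  intro u v W
  induction W with
  | nil => intro _ hu hv; exact SimpleGraph.Reachable.refl _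
  | @cons u w v ha p ih =>
    intro h hu hv
    have hw : (w:α) ∈ t := h w (by simp [SimpleGraph.Walk.support_cons])
    have hadj : (Γ.induce t).Adj ⟨u, hu⟩ ⟨w, hw⟩ := by
      have : Γ.Adj u.val w.val := by simpa using ha
      simpa using this
    exact hadj.reachable.trans
      (ih (fun x hx => h x (by simp [SimpleGraph.Walk.support_cons, hx])) hw hv)

/-- Let `a, b` be nonadjacent vertices of a finite simple graph `Γ`.  Every connected
component `K` of `Γ − st(a)` other than the one containing `b` is disjoint from `st(b)`,
is contained in a single connected component of `Γ − st(b)`, and moreover is either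
contained in the component of `Γ − st(b)` containing `a` (a subordinate component) or is
itself a connected component of `Γ − st(b)` (a shared component). -/
theorem component_classification [Fintype α] (Γ : SimpleGraph α) (a b : α)
    (hne : a ≠ b) (hnadj : ¬ Γ.Adj a b)
    (K : Set α) (hK : IsCompOf Γ a K) (hbK : b ∉ K) :
    K ∩ star Γ b = ∅ ∧
      (∃ L, IsCompOf Γ b L ∧ K ⊆ L) ∧
      ((∃ L, IsCompOf Γ b L ∧ a ∈ L ∧ K ⊆ L) ∨ IsCompOf Γ b K) := by
  obtain ⟨c, rfl⟩ := hK
  have hb_sa : b ∈ (star Γ a)ᶜ := by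
    simp only [Set.mem_compl_iff, mem_star_iff]
    push_neg
    exact ⟨fun h => hne h.symm, hnadj⟩
  have ha_sb : a ∈ (star Γ b)ᶜ := by
    simp only [Set.mem_compl_iff, mem_star_iff]
    push_neg
    exact ⟨hne, fun h => hnadj h.symm⟩
  -- Step 1: every vertex of K avoids star b
  have hKsb : ∀ x : ↥(star Γ a)ᶜ, x ∈ c.supp → (x : α) ∈ (star Γ b)ᶜ := by
    intro x hx
    simp only [Set.mem_compl_iff, mem_star_iff]
    push_neg
    constructor
    · rintro rfl; exact hbK ⟨x, hx, rfl⟩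
    · intro hadj
      apply hbK
      refine ⟨⟨b, hb_sa⟩, ?_, rfl⟩
      have hadj' : (Γ.induce (star Γ a)ᶜ).Adj ⟨b, hb_sa⟩ x := by simpa using hadj
      rw [SimpleGraph.ConnectedComponent.mem_supp_iff] at hx ⊢
      rw [← hx]
      exact SimpleGraph.ConnectedComponent.sound hadj'.reachable
  obtain ⟨k₀, hk₀⟩ := c.exists_rep
  have hk₀supp : k₀ ∈ c.supp := by rwa [SimpleGraph.ConnectedComponent.mem_supp_iff]
  have hk₀sb : (k₀ : α) ∈ (star Γ b)ᶜ := hKsb k₀ hk₀supp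
  set d := (Γ.induce (star Γ b)ᶜ).connectedComponentMk ⟨(k₀ : α), hk₀sb⟩ with hd
  -- Step 2: K ⊆ L where L is d's vertex set
  have hKL : Subtype.val '' c.supp ⊆ Subtype.val '' d.supp := by
    rintro _ ⟨x, hx, rfl⟩
    have hreach : (Γ.induce (star Γ a)ᶜ).Reachable k₀ x := by
      rw [SimpleGraph.ConnectedComponent.mem_supp_iff] at hx
      exact SimpleGraph.ConnectedComponent.exact (hk₀.trans hx.symm)
    obtain ⟨W⟩ := hreach
    have hsup : ∀ y ∈ W.support, (y : ↥(star Γ a)ᶜ).val ∈ (star Γ b)ᶜ := by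
      intro y hy
      apply hKsb
      rw [SimpleGraph.ConnectedComponent.mem_supp_iff, ← hk₀]
      exact (SimpleGraph.ConnectedComponent.sound
        (reachable_of_mem_support W hy)).symm
    have := reachable_transfer W hsup hk₀sb (hKsb x hx)
    exact ⟨⟨(x : α), hKsb x hx⟩, by
      rw [SimpleGraph.ConnectedComponent.mem_supp_iff, hd]
      exact (SimpleGraph.ConnectedComponent.sound this).symm, rfl⟩
  refine ⟨?_, ⟨Subtype.val '' d.supp, ⟨d, rfl⟩, hKL⟩, ?_⟩
  · rw [Set.eq_empty_iff_forall_notMem]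
    rintro x ⟨⟨y, hy, rfl⟩, hxb⟩
    exact (hKsb y hy) hxb
  by_cases hA : (⟨a, ha_sb⟩ : ↥(star Γ b)ᶜ) ∈ d.supp
  · exact Or.inl ⟨Subtype.val '' d.supp, ⟨d, rfl⟩, ⟨⟨a, ha_sb⟩, hA, rfl⟩, hKL⟩
  · -- shared: L ⊆ K, so K is itself a component of Γ − st(b)
    right
    refine ⟨d, Set.Subset.antisymm hKL ?_⟩
    rintro _ ⟨x, hx, rfl⟩
    have hreach : (Γ.induce (star Γ b)ᶜ).Reachable ⟨(k₀ : α), hk₀sb⟩ x := by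
      rw [SimpleGraph.ConnectedComponent.mem_supp_iff, hd] at hx
      exact SimpleGraph.ConnectedComponent.exact hx.symm
    obtain ⟨W⟩ := hreach
    have hsup : ∀ y ∈ W.support, (y : ↥(star Γ b)ᶜ).val ∈ (star Γ a)ᶜ := by
      intro y hy
      have hyd : y ∈ d.supp := by
        rw [SimpleGraph.ConnectedComponent.mem_supp_iff, hd]
        exact (SimpleGraph.ConnectedComponent.sound
          (reachable_of_mem_support W hy)).symm
      simp only [Set.mem_compl_iff, mem_star_iff]
      push_neg
      constructor
      · intro hya
        apply hA
        have : y = ⟨a, ha_sb⟩ := Subtype.ext hya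
        rwa [← this]
      · intro hadj
        apply hA
        have hadj' : (Γ.induce (star Γ b)ᶜ).Adj ⟨a, ha_sb⟩ y := by simpa using hadj
        rw [SimpleGraph.ConnectedComponent.mem_supp_iff] at hyd ⊢
        rw [← hyd]
        exact SimpleGraph.ConnectedComponent.sound hadj'.reachable
    have hx_sa : (x : α) ∈ (star Γ a)ᶜ := hsup x W.end_mem_support
    have hreach' := reachable_transfer W hsup k₀.2 hx_sa
    have hk₀eq : (⟨((⟨(k₀ : α), hk₀sb⟩ : ↥(star Γ b)ᶜ) : α), k₀.2⟩ : ↥(star Γ a)ᶜ) = k₀ :=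
      Subtype.ext rfl
    rw [hk₀eq] at hreach'
    exact ⟨⟨(x : α), hx_sa⟩, by
      rw [SimpleGraph.ConnectedComponent.mem_supp_iff, ← hk₀]
      exact (SimpleGraph.ConnectedComponent.sound hreach').symm, rfl⟩

end RaagPaper
end

section
/- Let Γ be a finite simple graph and a, b nonadjacent vertices. The components of Γ − st(a) can be written as A_0, …, A_k, C_1, …, C_l and the components of Γ − st(b) as B_0, …, B_m, C_1, …, C_l, where b ∈ A_0, a ∈ B_0, each A_i (i ≥ 1) is contained in B_0, and each B_j (j ≥ 1) is contained in A_0. -/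
namespace RaagPaper

section Aux

variable {α : Type}

open SimpleGraph

lemma mem_compl_star {Γ : SimpleGraph α} {a x : α} :
    x ∈ (star Γ a)ᶜ ↔ x ≠ a ∧ ¬ Γ.Adj a x := by
  simp only [star, Set.mem_compl_iff, Set.mem_insert_iff, mem_neighborSet, not_or]

lemma reach_transfer {Γ : SimpleGraph α} {s t : Set α} :
    ∀ {p q : ↥s} (w : (Γ.induce s).Walk p q) (hp : (p : α) ∈ t) (hq : (q : α) ∈ t),
    (∀ y ∈ w.support, (y : α) ∈ t) →
    (Γ.induce t).Reachable ⟨p, hp⟩ ⟨q, hq⟩ := by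
  intro p q w
  induction w with
  | nil => intro hp hq _; exact Reachable.refl _
  | cons h w ih =>
    intro hp hq hall
    rename_i u v q'
    have hv : (v : α) ∈ t := hall v (by simp [SimpleGraph.Walk.support_cons])
    have hadj : (Γ.induce t).Adj ⟨u, hp⟩ ⟨v, hv⟩ := by
      have : Γ.Adj u v := by simpa using h
      simp only [SimpleGraph.comap_adj, SimpleGraph.induce_eq_coe_induce_top]
      exact ⟨hp, hv, this⟩
    exact hadj.reachable.trans (ih hv hq (fun y hy => hall y (by simp [SimpleGraph.Walk.support_cons, hy])))

lemma isCompOutside_subset {Γ : SimpleGraph α} {s K : Set α}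
    (h : IsCompOutside Γ s K) : K ⊆ sᶜ := by
  obtain ⟨c, rfl⟩ := h
  rintro x ⟨y, -, rfl⟩
  exact y.2

lemma isCompOutside_nonempty {Γ : SimpleGraph α} {s K : Set α}
    (h : IsCompOutside Γ s K) : K.Nonempty := by
  obtain ⟨c, rfl⟩ := h
  obtain ⟨v, rfl⟩ := c.exists_rep
  exact ⟨v, v, rfl, rfl⟩

lemma mem_comp {Γ : SimpleGraph α} {s : Set α} {v : α} (hv : v ∈ sᶜ) :
    ∃ K, IsCompOutside Γ s K ∧ v ∈ K :=
  ⟨_, ⟨(Γ.induce sᶜ).connectedComponentMk ⟨v, hv⟩, rfl⟩, ⟨v, hv⟩, rfl, rfl⟩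

lemma comp_eq_of_mem {Γ : SimpleGraph α} {s K K' : Set α} {x : α}
    (h : IsCompOutside Γ s K) (h' : IsCompOutside Γ s K') (hx : x ∈ K) (hx' : x ∈ K') :
    K = K' := by
  obtain ⟨c, rfl⟩ := h
  obtain ⟨c', rfl⟩ := h'
  obtain ⟨y, hy, rfl⟩ := hx
  obtain ⟨z, hz, hzy⟩ := hx'
  have : z = y := Subtype.ext hzy
  subst this
  rw [SimpleGraph.ConnectedComponent.mem_supp_iff] at hy hz
  rw [← hy, ← hz]

/-- A component outside `s` whose image avoids `t`'s complement... transfer to components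
outside `t`. -/
lemma exists_comp_superset {Γ : SimpleGraph α} {s t K : Set α}
    (hK : IsCompOutside Γ s K) (hKt : K ⊆ tᶜ) :
    ∃ L, IsCompOutside Γ t L ∧ K ⊆ L := by
  classical
  obtain ⟨c, rfl⟩ := hK
  obtain ⟨v, rfl⟩ := c.exists_rep
  have hvK : (v : α) ∈ Subtype.val '' ((Γ.induce sᶜ).connectedComponentMk v).supp :=
    ⟨v, rfl, rfl⟩
  refine ⟨_, ⟨(Γ.induce tᶜ).connectedComponentMk ⟨v, hKt hvK⟩, rfl⟩, ?_⟩
  rintro x ⟨y, hy, rfl⟩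
  change (Γ.induce sᶜ).connectedComponentMk y = (Γ.induce sᶜ).connectedComponentMk v at hy
  have hreach : (Γ.induce sᶜ).Reachable y v := ConnectedComponent.exact hy
  obtain ⟨w⟩ := hreach
  have hall : ∀ z ∈ w.support, (z : α) ∈ tᶜ := by
    intro z hz
    have : (Γ.induce sᶜ).Reachable z v := (w.dropUntil z hz).reachable
    have hzc : z ∈ ((Γ.induce sᶜ).connectedComponentMk v).supp := by
      rw [SimpleGraph.ConnectedComponent.mem_supp_iff]
      exact ConnectedComponent.sound this
    exact hKt ⟨z, hzc, rfl⟩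
  have := reach_transfer w (hall y w.start_mem_support) (hall v w.end_mem_support) hall
  refine ⟨⟨(y:α), hall y w.start_mem_support⟩, ?_, rfl⟩
  rw [SimpleGraph.ConnectedComponent.mem_supp_iff]
  exact ConnectedComponent.sound this



open SimpleGraph


/-- A component of `Γ − st(a)` not containing `b` avoids `st(b)` entirely. -/
lemma comp_avoids_star {Γ : SimpleGraph α} {a b : α} {K : Set α}
    (hne : a ≠ b) (hnadj : ¬ Γ.Adj a b) (hK : IsCompOf Γ a K) (hbK : b ∉ K) :
    K ⊆ (star Γ b)ᶜ := by
  intro x hx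
  rw [mem_compl_star]
  constructor
  · rintro rfl; exact hbK hx
  · intro hadj
    -- edge b–x survives in Γ − st(a), so b ∈ K, contradiction
    have hb : b ∈ (star Γ a)ᶜ := mem_compl_star.2 ⟨Ne.symm hne, hnadj⟩
    have hxs : x ∈ (star Γ a)ᶜ := isCompOutside_subset hK hx
    obtain ⟨c, rfl⟩ := hK
    obtain ⟨y, hy, rfl⟩ := hx
    have hadj' : (Γ.induce (star Γ a)ᶜ).Adj y ⟨b, hb⟩ := by
      simp only [SimpleGraph.comap_adj, SimpleGraph.induce_eq_coe_induce_top]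
      exact ⟨y.2, hb, hadj.symm⟩
    apply hbK
    refine ⟨⟨b, hb⟩, ?_, rfl⟩
    rw [SimpleGraph.ConnectedComponent.mem_supp_iff] at hy ⊢
    rw [← hy]
    exact ConnectedComponent.sound hadj'.symm.reachable

/-- Key dichotomy: a component of `Γ − st(a)` not containing `b` is either inside the
component of `a` in `Γ − st(b)`, or is a shared component. -/
lemma comp_dichotomy {Γ : SimpleGraph α} {a b : α} {K B₀ : Set α}
    (hne : a ≠ b) (hnadj : ¬ Γ.Adj a b)
    (hK : IsCompOf Γ a K) (hbK : b ∉ K)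
    (hB₀ : IsCompOf Γ b B₀) (haB₀ : a ∈ B₀) :
    K ⊆ B₀ ∨ Shared Γ a b K := by
  have hKt : K ⊆ (star Γ b)ᶜ := comp_avoids_star hne hnadj hK hbK
  obtain ⟨L, hL, hKL⟩ := exists_comp_superset hK hKt
  by_cases haL : a ∈ L
  · left
    rwa [comp_eq_of_mem hB₀ hL haB₀ haL]
  · right
    have hLs : L ⊆ (star Γ a)ᶜ := comp_avoids_star (Ne.symm hne) (fun h => hnadj h.symm) hL haL
    obtain ⟨K', hK', hLK'⟩ := exists_comp_superset hL hLs
    obtain ⟨x, hx⟩ := isCompOutside_nonempty hK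
    have : K = K' := comp_eq_of_mem hK hK' hx (hLK' (hKL hx))
    have hKLeq : K = L := Set.Subset.antisymm hKL (this ▸ hLK')
    exact ⟨hK, hKLeq ▸ hL, hKLeq ▸ haL, hbK⟩

lemma enum_set {β : Type} [Finite β] (S : Set β) :
    ∃ (l : ℕ) (f : Fin l → β), Function.Injective f ∧ Set.range f = S := by
  obtain ⟨l, ⟨e⟩⟩ := Finite.exists_equiv_fin ↥S
  refine ⟨l, fun i => (e.symm i : β), ?_, ?_⟩
  · intro i j h
    exact e.symm.injective (Subtype.ext h)
  · ext y
    constructor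
    · rintro ⟨i, rfl⟩; exact (e.symm i).2
    · intro hy; exact ⟨e ⟨y, hy⟩, by simp⟩

lemma enum_set_base {β : Type} [Finite β] (S : Set β) (x : β) (hx : x ∈ S) :
    ∃ (n : ℕ) (f : Fin (n + 1) → β), Function.Injective f ∧ Set.range f = S ∧ f 0 = x := by
  obtain ⟨n, ⟨e⟩⟩ := Finite.exists_equiv_fin ↥(S \ {x} : Set β)
  classical
  refine ⟨n, fun i => if h : i = 0 then x else (e.symm (i.pred h) : β), ?_, ?_, by simp⟩
  · intro i j h
    by_cases hi : i = 0 <;> by_cases hj : j = 0 <;> simp [hi, hj] at h ⊢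
    · exact absurd h.symm (e.symm (j.pred hj)).2.2
    · exact absurd h (e.symm (i.pred hi)).2.2
    · have := e.symm.injective (Subtype.ext h)
      have := congrArg Fin.succ this
      rwa [Fin.succ_pred, Fin.succ_pred] at this
  · ext y
    constructor
    · rintro ⟨i, rfl⟩
      by_cases hi : i = 0
      · simpa [hi] using hx
      · simpa [hi] using (e.symm (i.pred hi)).2.1
    · intro hy
      by_cases hyx : y = x
      · exact ⟨0, by simp [hyx]⟩
      · refine ⟨(e ⟨y, hy, hyx⟩).succ, ?_⟩
        simp [Fin.succ_ne_zero]




lemma shared_comm {Γ : SimpleGraph α} {a b : α} {M : Set α} :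
    Shared Γ b a M ↔ Shared Γ a b M := by
  unfold Shared; tauto


theorem component_partition' [Fintype α] (Γ : SimpleGraph α) (a b : α)
    (hne : a ≠ b) (hnadj : ¬ Γ.Adj a b) :
    ∃ (k m l : ℕ) (A : Fin (k + 1) → Set α) (B : Fin (m + 1) → Set α)
      (C : Fin l → Set α),
      Function.Injective A ∧ Function.Injective B ∧ Function.Injective C ∧
      (∀ i j, A i ≠ C j) ∧ (∀ i j, B i ≠ C j) ∧
      (∀ K, IsCompOf Γ a K ↔ (K ∈ Set.range A ∨ K ∈ Set.range C)) ∧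
      (∀ K, IsCompOf Γ b K ↔ (K ∈ Set.range B ∨ K ∈ Set.range C)) ∧
      b ∈ A 0 ∧ a ∈ B 0 ∧
      (∀ i, i ≠ 0 → A i ⊆ B 0) ∧ (∀ j, j ≠ 0 → B j ⊆ A 0) := by
  have hb : b ∈ (star Γ a)ᶜ := mem_compl_star.2 ⟨Ne.symm hne, hnadj⟩
  have ha : a ∈ (star Γ b)ᶜ := mem_compl_star.2 ⟨hne, fun h => hnadj h.symm⟩
  obtain ⟨A₀, hA₀, hbA₀⟩ := mem_comp (Γ := Γ) hb
  obtain ⟨B₀, hB₀, haB₀⟩ := mem_comp (Γ := Γ) ha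
  set SA : Set (Set α) := {K | IsCompOf Γ a K ∧ ¬ Shared Γ a b K} with hSA
  set SB : Set (Set α) := {K | IsCompOf Γ b K ∧ ¬ Shared Γ a b K} with hSB
  set SC : Set (Set α) := {K | Shared Γ a b K} with hSC
  have hA₀SA : A₀ ∈ SA := ⟨hA₀, fun hsh => hsh.2.2.2 hbA₀⟩
  have hB₀SB : B₀ ∈ SB := ⟨hB₀, fun hsh => hsh.2.2.1 haB₀⟩
  obtain ⟨k, A, hAinj, hArange, hA0⟩ := enum_set_base SA A₀ hA₀SA
  obtain ⟨m, B, hBinj, hBrange, hB0⟩ := enum_set_base SB B₀ hB₀SB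
  obtain ⟨l, C, hCinj, hCrange⟩ := enum_set SC
  have hAmem : ∀ i, A i ∈ SA := fun i => hArange ▸ Set.mem_range_self i
  have hBmem : ∀ i, B i ∈ SB := fun i => hBrange ▸ Set.mem_range_self i
  have hCmem : ∀ j, C j ∈ SC := fun j => hCrange ▸ Set.mem_range_self j
  refine ⟨k, m, l, A, B, C, hAinj, hBinj, hCinj, ?_, ?_, ?_, ?_, hA0 ▸ hbA₀, hB0 ▸ haB₀, ?_, ?_⟩
  · intro i j h
    exact (hAmem i).2 (h ▸ hCmem j)
  · intro i j h
    exact (hBmem i).2 (h ▸ hCmem j)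
  · intro K
    rw [hArange, hCrange]
    constructor
    · intro hK
      by_cases h : Shared Γ a b K
      · exact Or.inr h
      · exact Or.inl ⟨hK, h⟩
    · rintro (⟨h, -⟩ | h)
      · exact h
      · exact h.1
  · intro K
    rw [hBrange, hCrange]
    constructor
    · intro hK
      by_cases h : Shared Γ a b K
      · exact Or.inr h
      · exact Or.inl ⟨hK, h⟩
    · rintro (⟨h, -⟩ | h)
      · exact h
      · exact h.2.1
  · intro i hi
    have hbAi : b ∉ A i := by
      intro hbAi
      exact hi (hAinj ((comp_eq_of_mem (hAmem i).1 hA₀ hbAi hbA₀).trans hA0.symm))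
    rcases comp_dichotomy hne hnadj (hAmem i).1 hbAi hB₀ haB₀ with h | h
    · exact hB0 ▸ h
    · exact absurd h (hAmem i).2
  · intro j hj
    have haBj : a ∉ B j := by
      intro haBj
      exact hj (hBinj ((comp_eq_of_mem (hBmem j).1 hB₀ haBj haB₀).trans hB0.symm))
    rcases comp_dichotomy (Ne.symm hne) (fun h => hnadj h.symm) (hBmem j).1 haBj hA₀ hbA₀ with h | h
    · exact hA0 ▸ h
    · exact absurd (shared_comm.1 h) (hBmem j).2


end Aux

/-- For nonadjacent vertices `a, b` of a finite simple graph `Γ`, the components of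
`Γ − st(a)` can be listed as `A 0, …, A k, C 1, …, C l` and those of `Γ − st(b)` as
`B 0, …, B m, C 1, …, C l`, where `b ∈ A 0`, `a ∈ B 0`, each `A i` with `i ≠ 0` is
contained in `B 0`, and each `B j` with `j ≠ 0` is contained in `A 0`. -/
theorem component_partition [Fintype α] (Γ : SimpleGraph α) (a b : α)
    (hne : a ≠ b) (hnadj : ¬ Γ.Adj a b) :
    ∃ (k m l : ℕ) (A : Fin (k + 1) → Set α) (B : Fin (m + 1) → Set α)
      (C : Fin l → Set α),
      Function.Injective A ∧ Function.Injective B ∧ Function.Injective C ∧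
      (∀ i j, A i ≠ C j) ∧ (∀ i j, B i ≠ C j) ∧
      (∀ K, IsCompOf Γ a K ↔ (K ∈ Set.range A ∨ K ∈ Set.range C)) ∧
      (∀ K, IsCompOf Γ b K ↔ (K ∈ Set.range B ∨ K ∈ Set.range C)) ∧
      b ∈ A 0 ∧ a ∈ B 0 ∧
      (∀ i, i ≠ 0 → A i ⊆ B 0) ∧ (∀ j, j ≠ 0 → B j ⊆ A 0) := by
  exact component_partition' Γ a b hne hnadj

end RaagPaper
end

section
/- Let Γ be a finite simple graph and a, b nonadjacent vertices. The pair (a,b) is a SIL-pair (i.e., there is a connected component R of Γ − (lk(a) ∩ lk(b)) with a ∉ R and b ∉ R) if and only if there exists a connected component K of Γ − st(a) with b ∉ K that is also a connected component of Γ − st(b) with a ∉ K (a shared component). -/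
namespace RaagPaper

lemma supp_closed (Γ : SimpleGraph α) (s : Set α) (c : (Γ.induce sᶜ).ConnectedComponent)
    {x y : α} (hx : x ∈ Subtype.val '' c.supp) (hy : y ∈ sᶜ) (hadj : Γ.Adj x y) :
    y ∈ Subtype.val '' c.supp := by
  obtain ⟨x', hx', rfl⟩ := hx
  refine ⟨⟨y, hy⟩, ?_, rfl⟩
  rw [SimpleGraph.ConnectedComponent.mem_supp_iff] at hx' ⊢
  rw [← hx']
  exact SimpleGraph.ConnectedComponent.sound
    (SimpleGraph.Adj.reachable (by simpa using hadj.symm))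

lemma walk_transfer (Γ : SimpleGraph α) (s t : Set α)
    (c : (Γ.induce sᶜ).ConnectedComponent)
    (hKt : ∀ x ∈ Subtype.val '' c.supp, x ∈ tᶜ) :
    ∀ {u v : ↥sᶜ} (_ : (Γ.induce sᶜ).Walk u v) (_ : u.val ∈ Subtype.val '' c.supp),
      v.val ∈ Subtype.val '' c.supp ∧
      ∀ (hu : u.val ∈ tᶜ) (hv : v.val ∈ tᶜ),
        (Γ.induce tᶜ).Reachable ⟨u.val, hu⟩ ⟨v.val, hv⟩ := by
  intro u v w
  induction w with
  | nil => exact fun hu => ⟨hu, fun _ _ => SimpleGraph.Reachable.refl _⟩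
  | cons h p ih =>
    rename_i u' x' v'
    intro hu
    have hadj : Γ.Adj u'.val x'.val := by simpa using h
    have hx : x'.val ∈ Subtype.val '' c.supp := supp_closed Γ s c hu x'.2 hadj
    obtain ⟨hv, hreach⟩ := ih hx
    refine ⟨hv, fun hu' hv' => ?_⟩
    exact (SimpleGraph.Adj.reachable (u := (⟨u'.val, hu'⟩ : ↥tᶜ))
      (v := ⟨x'.val, hKt _ hx⟩) (by simpa using hadj)).trans (hreach _ hv')

lemma walk_back (Γ : SimpleGraph α) (s t : Set α)
    (c : (Γ.induce sᶜ).ConnectedComponent)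
    (hclosed : ∀ x ∈ Subtype.val '' c.supp, ∀ y ∈ tᶜ, Γ.Adj x y → y ∈ sᶜ) :
    ∀ {u v : ↥tᶜ} (_ : (Γ.induce tᶜ).Walk u v),
      u.val ∈ Subtype.val '' c.supp → v.val ∈ Subtype.val '' c.supp := by
  intro u v w
  induction w with
  | nil => exact id
  | cons h p ih =>
    rename_i u' x' v'
    intro hu
    have hadj : Γ.Adj u'.val x'.val := by simpa using h
    have hxs : x'.val ∈ sᶜ := hclosed _ hu _ x'.2 hadj
    exact ih (supp_closed Γ s c hu hxs hadj)

/-- Component transfer lemma: if the support of a component `c` of `Γ − s` lies in `tᶜ`,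
and neighbors in `tᶜ` of the support lie in `sᶜ`, then the support of `c` is also
a component of `Γ − t`. -/
lemma comp_transfer (Γ : SimpleGraph α) (s t : Set α)
    (c : (Γ.induce sᶜ).ConnectedComponent)
    (hKt : ∀ x ∈ Subtype.val '' c.supp, x ∈ tᶜ)
    (hclosed : ∀ x ∈ Subtype.val '' c.supp, ∀ y ∈ tᶜ, Γ.Adj x y → y ∈ sᶜ) :
    ∃ d : (Γ.induce tᶜ).ConnectedComponent,
      Subtype.val '' c.supp = Subtype.val '' d.supp := by
  obtain ⟨x₀, hx₀⟩ := c.exists_rep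
  have hx₀K : x₀.val ∈ Subtype.val '' c.supp := ⟨x₀, hx₀, rfl⟩
  refine ⟨(Γ.induce tᶜ).connectedComponentMk ⟨x₀.val, hKt _ hx₀K⟩, ?_⟩
  ext y
  constructor
  · rintro ⟨y', hy', rfl⟩
    have hreach : (Γ.induce sᶜ).Reachable x₀ y' := by
      rw [SimpleGraph.ConnectedComponent.mem_supp_iff] at hy'
      exact SimpleGraph.ConnectedComponent.exact (hx₀.trans hy'.symm)
    obtain ⟨w⟩ := hreach
    obtain ⟨hyK, hr⟩ := walk_transfer Γ s t c hKt w hx₀K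
    exact ⟨⟨y'.val, hKt _ hyK⟩, by
      rw [SimpleGraph.ConnectedComponent.mem_supp_iff]
      exact (SimpleGraph.ConnectedComponent.sound (hr (hKt _ hx₀K) (hKt _ hyK))).symm, rfl⟩
  · rintro ⟨y', hy', rfl⟩
    rw [SimpleGraph.ConnectedComponent.mem_supp_iff] at hy'
    have hreach : (Γ.induce tᶜ).Reachable ⟨x₀.val, hKt _ hx₀K⟩ y' :=
      SimpleGraph.ConnectedComponent.exact hy'.symm
    obtain ⟨w⟩ := hreach
    exact walk_back Γ s t c hclosed w hx₀K

/-- Nonadjacent vertices `a, b` form a SIL-pair ... -/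
theorem sil_iff_shared [Fintype α] (Γ : SimpleGraph α) (a b : α)
    (hne : a ≠ b) (hnadj : ¬ Γ.Adj a b) :
    (∃ R, IsCompOutside Γ (Γ.neighborSet a ∩ Γ.neighborSet b) R ∧ a ∉ R ∧ b ∉ R) ↔
      (∃ K, IsCompOf Γ a K ∧ b ∉ K ∧ IsCompOf Γ b K ∧ a ∉ K) := by
  set L : Set α := Γ.neighborSet a ∩ Γ.neighborSet b with hL
  have haL : a ∈ Lᶜ := by
    simp [hL, SimpleGraph.mem_neighborSet]
  have hbL : b ∈ Lᶜ := by
    simp [hL, SimpleGraph.mem_neighborSet]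
  constructor
  · rintro ⟨R, ⟨c, rfl⟩, haR, hbR⟩
    -- R avoids st(a): else a ∈ R
    have hsta : ∀ x ∈ Subtype.val '' c.supp, x ∈ (star Γ a)ᶜ := by
      intro x hx
      intro hmem
      rcases hmem with rfl | hadj
      · exact haR hx
      · have h' : Γ.Adj a x := hadj
        exact haR (supp_closed Γ L c hx haL h'.symm)
    have hstb : ∀ x ∈ Subtype.val '' c.supp, x ∈ (star Γ b)ᶜ := by
      intro x hx
      intro hmem
      rcases hmem with rfl | hadj
      · exact hbR hx
      · have h' : Γ.Adj b x := hadj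
        exact hbR (supp_closed Γ L c hx hbL h'.symm)
    have hcla : ∀ x ∈ Subtype.val '' c.supp, ∀ y ∈ (star Γ a)ᶜ, Γ.Adj x y → y ∈ Lᶜ := by
      intro x _ y hy _ hyL
      exact hy (Set.mem_insert_iff.mpr (Or.inr hyL.1))
    have hclb : ∀ x ∈ Subtype.val '' c.supp, ∀ y ∈ (star Γ b)ᶜ, Γ.Adj x y → y ∈ Lᶜ := by
      intro x _ y hy _ hyL
      exact hy (Set.mem_insert_iff.mpr (Or.inr hyL.2))
    obtain ⟨d₁, hd₁⟩ := comp_transfer Γ L (star Γ a) c hsta hcla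
    obtain ⟨d₂, hd₂⟩ := comp_transfer Γ L (star Γ b) c hstb hclb
    exact ⟨Subtype.val '' c.supp, ⟨d₁, hd₁⟩, hbR, ⟨d₂, hd₂⟩, haR⟩
  · rintro ⟨K, ⟨c₁, rfl⟩, hbK, ⟨c₂, hc₂⟩, haK⟩
    -- K ⊆ Lᶜ
    have hKL : ∀ x ∈ Subtype.val '' c₁.supp, x ∈ Lᶜ := by
      rintro x ⟨x', _, rfl⟩
      intro hmem
      exact x'.2 (Set.mem_insert_iff.mpr (Or.inr hmem.1))
    -- closure: neighbors of K inside Lᶜ lie in (st a)ᶜ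
    have hcl : ∀ x ∈ Subtype.val '' c₁.supp, ∀ y ∈ Lᶜ, Γ.Adj x y → y ∈ (star Γ a)ᶜ := by
      intro x hx y hyL hadj
      intro hmem
      rcases hmem with rfl | hya
      · -- y = a : x adjacent to a, but x ∉ st a
        obtain ⟨x', _, rfl⟩ := hx
        exact x'.2 (Set.mem_insert_iff.mpr (Or.inr hadj.symm))
      · -- y ∈ lk a, y ∉ L so y ∉ lk b; also y ≠ b; so y ∈ (st b)ᶜ
        have hyb : y ∈ (star Γ b)ᶜ := by
          intro hmem'
          rcases hmem' with rfl | hyb'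
          · exact hnadj hya
          · exact hyL ⟨hya, hyb'⟩
        -- then y ∈ K (c₂ is a component of Γ − st b containing K), so y ∉ st a : contra
        have hx₂ : x ∈ Subtype.val '' c₂.supp := by rw [← hc₂]; exact hx
        have hyK : y ∈ Subtype.val '' c₂.supp :=
          supp_closed Γ (star Γ b) c₂ hx₂ hyb hadj
        have hyK' : y ∈ Subtype.val '' c₁.supp := by rw [hc₂]; exact hyK
        obtain ⟨y', _, rfl⟩ := hyK'
        exact y'.2 (Set.mem_insert_iff.mpr (Or.inr hya))
    obtain ⟨d, hd⟩ := comp_transfer Γ (star Γ a) L c₁ hKL hcl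
    exact ⟨Subtype.val '' c₁.supp, ⟨d, hd⟩, haK, hbK⟩

end RaagPaper
end

section
/- (Star Lemma) Suppose every support graph Δ_a is considered and (a,b) is a SIL-pair. Then the dominating component [b]_a and all shared components of Γ − st(a) for the pair (a,b) lie in a single connected component of Δ_a; each shared component is adjacent in Δ_a to [b]_a. Moreover, if Δ_a is a forest, then no two distinct shared components for (a,b) are adjacent in Δ_a. -/
namespace RaagPaper

/-- The support graph `Δ_a`: vertices are the connected components of `Γ − st(a)`, with
an edge between components `K` and `L` whenever there is a vertex `b ∈ K` such that `L`
is a shared component for the pair `(a, b)` (symmetrized). -/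
def supportGraph (Γ : SimpleGraph α) (a : α) :
    SimpleGraph {K : Set α // IsCompOf Γ a K} :=
  SimpleGraph.fromRel fun K L => ∃ b, b ∈ K.1 ∧ Shared Γ a b L.1

/-- (Star Lemma.)  Let `(a, b)` be a SIL-pair and let `[b]_a` be the component of
`Γ − st(a)` containing `b`.  Then every shared component for `(a, b)` is adjacent in
`Δ_a` to `[b]_a`; in particular `[b]_a` and all the shared components lie in a single
connected component of `Δ_a`.  Moreover, if `Δ_a` is a forest, then no two distinct
shared components for `(a, b)` are adjacent in `Δ_a`. -/
theorem star_lemma [Fintype α] (Γ : SimpleGraph α) (a b : α)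
    (hne : a ≠ b) (hnadj : ¬ Γ.Adj a b)
    (hSIL : ∃ M, Shared Γ a b M)
    (Kb : Set α) (hKb : IsCompOf Γ a Kb) (hb : b ∈ Kb) :
    (∀ L (hL : Shared Γ a b L),
        (supportGraph Γ a).Adj ⟨Kb, hKb⟩ ⟨L, hL.1⟩) ∧
      (∀ L (hL : Shared Γ a b L),
        (supportGraph Γ a).Reachable ⟨Kb, hKb⟩ ⟨L, hL.1⟩) ∧
      ((supportGraph Γ a).IsAcyclic →
        ∀ L L' (hL : Shared Γ a b L) (hL' : Shared Γ a b L'), L ≠ L' →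
          ¬ (supportGraph Γ a).Adj ⟨L, hL.1⟩ ⟨L', hL'.1⟩) := by

  have hadj : ∀ L (hL : Shared Γ a b L),
      (supportGraph Γ a).Adj ⟨Kb, hKb⟩ ⟨L, hL.1⟩ := by
    intro L hL
    refine ⟨?_, Or.inl ⟨b, hb, hL⟩⟩
    intro h
    have hKbL : Kb = L := congrArg Subtype.val h
    exact hL.2.2.2 (hKbL ▸ hb)
  refine ⟨hadj, fun L hL => (hadj L hL).reachable, ?_⟩
  intro hac L L' hL hL' hne' hLL'
  have h1 := hadj L hL
  have h2 := hadj L' hL'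
  -- two distinct paths from Kb to L'
  have hKL : (⟨Kb, hKb⟩ : {K : Set α // IsCompOf Γ a K}) ≠ ⟨L, hL.1⟩ := h1.ne
  have hKL' : (⟨Kb, hKb⟩ : {K : Set α // IsCompOf Γ a K}) ≠ ⟨L', hL'.1⟩ := h2.ne
  have hLL : (⟨L, hL.1⟩ : {K : Set α // IsCompOf Γ a K}) ≠ ⟨L', hL'.1⟩ :=
    fun h => hne' (congrArg Subtype.val h)
  have hpu := (SimpleGraph.isAcyclic_iff_path_unique).mp hac
  let p1 : (supportGraph Γ a).Walk ⟨Kb, hKb⟩ ⟨L', hL'.1⟩ := h2.toWalk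
  let p2 : (supportGraph Γ a).Walk ⟨Kb, hKb⟩ ⟨L', hL'.1⟩ :=
    SimpleGraph.Walk.cons h1 (SimpleGraph.Walk.cons hLL' SimpleGraph.Walk.nil)
  have hp1 : p1.IsPath := SimpleGraph.Path.singleton h2 |>.2
  have hp2 : p2.IsPath := by
    apply SimpleGraph.Walk.IsPath.cons
    · exact (SimpleGraph.Path.singleton hLL').2
    · simp [hKL, hKL']
  have := hpu ⟨p1, hp1⟩ ⟨p2, hp2⟩
  have hlen : p1.length = p2.length := congrArg SimpleGraph.Walk.length (Subtype.ext_iff.mp this)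
  simp [p1, p2] at hlen


end RaagPaper
end

section
/- Let G be a right-angled Artin group A_Γ with Γ finite, V = Hom(G; ℝ) with basis {χ_a : a ∈ V(Γ)} dual to the vertex generators, and let 𝒱_G be the set of subspaces V_S = ⟨χ_a : a ∈ S⟩ for S ranging over maximal vertex subsets spanning disconnected induced subgraphs of Γ. Then dim H_0(V, 𝒱_G) equals the number of vertices of Γ adjacent to every other vertex (the rank of the center of A_Γ), and H_n(V, 𝒱_G) = 0 for all n ≥ 1. -/
namespace Arrangement


lemma mem_span_single_iff (N : ℕ) (T : Set (Fin N)) (x : Fin N → ℝ) :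
    x ∈ Submodule.span ℝ ((fun a => Pi.single a (1 : ℝ)) '' T) ↔ ∀ a ∉ T, x a = 0 := by
  constructor
  · intro hx a ha
    induction hx using Submodule.span_induction with
    | mem v hv =>
      obtain ⟨b, hb, rfl⟩ := hv
      have : b ≠ a := fun h => ha (h ▸ hb)
      simp [Pi.single_apply, this]
    | zero => simp
    | add v w _ _ hv hw => simp [hv, hw]
    | smul c v _ hv => simp [hv]
  · intro h
    have hx : x = ∑ a : Fin N, x a • (Pi.single a (1 : ℝ) : Fin N → ℝ) := by
      funext b
      simp [Finset.sum_apply, Pi.single_apply, Finset.sum_ite_eq', mul_comm]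
    rw [hx]
    refine Submodule.sum_mem _ fun a _ => ?_
    by_cases ha : a ∈ T
    · exact Submodule.smul_mem _ _ (Submodule.subset_span ⟨a, ha, rfl⟩)
    · rw [h a ha, zero_smul]; exact Submodule.zero_mem _

lemma card_filter_insert_lt {n : ℕ} (s : Finset (Fin n)) {b : Fin n} (hb : b ∉ s) (c : Fin n) :
    ((insert b s).filter (· < c)).card
      = (s.filter (· < c)).card + if b < c then 1 else 0 := by
  rw [Finset.filter_insert]
  split_ifs with h
  · rw [Finset.card_insert_of_notMem (fun hm => hb (Finset.mem_filter.mp hm).1)]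
  · rfl

section Setup

variable {N n : ℕ} (S : Fin n → Finset (Fin N))

def VS : Fin n → Submodule ℝ (Fin N → ℝ) :=
  fun i => Submodule.span ℝ ((fun a => Pi.single a (1 : ℝ)) '' (S i : Set (Fin N)))

lemma mem_iInf_VS (J : Finset (Fin n)) (x : Fin N → ℝ) :
    x ∈ (⨅ j ∈ J, VS S j) ↔ ∀ j ∈ J, ∀ a ∉ S j, x a = 0 := by
  simp only [Submodule.mem_iInf, VS, mem_span_single_iff, Finset.mem_coe]

noncomputable def coordOf {k : ℕ} (y : Ck ℝ (Fin N → ℝ) n (VS S) k) (T : Finset (Fin n))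
    (a : Fin N) : ℝ :=
  if h : T.card = k then (y ⟨T, h⟩ : Fin N → ℝ) a else 0

lemma coordOf_eq {k : ℕ} (y : Ck ℝ (Fin N → ℝ) n (VS S) k) (T : Finset (Fin n))
    (h : T.card = k) (a : Fin N) : coordOf S y T a = (y ⟨T, h⟩ : Fin N → ℝ) a := dif_pos h

lemma coordOf_eq_zero {k : ℕ} (y : Ck ℝ (Fin N → ℝ) n (VS S) k) {T : Finset (Fin n)}
    {j : Fin n} (hj : j ∈ T) {a : Fin N} (ha : a ∉ S j) : coordOf S y T a = 0 := by
  unfold coordOf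
  split
  · next h => exact (mem_iInf_VS S T _).mp (y ⟨T, h⟩).2 j hj a ha
  · rfl

lemma coordOf_add {k : ℕ} (x y : Ck ℝ (Fin N → ℝ) n (VS S) k) (T : Finset (Fin n))
    (a : Fin N) : coordOf S (x + y) T a = coordOf S x T a + coordOf S y T a := by
  unfold coordOf; split <;> simp

lemma coordOf_smul {k : ℕ} (c : ℝ) (x : Ck ℝ (Fin N → ℝ) n (VS S) k) (T : Finset (Fin n))
    (a : Fin N) : coordOf S (c • x) T a = c * coordOf S x T a := by
  unfold coordOf; split <;> simp

lemma bd_coord {k : ℕ} (y : Ck ℝ (Fin N → ℝ) n (VS S) (k + 1)) (J : Idx n k) (a : Fin N) :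
    ((bd ℝ (Fin N → ℝ) n (VS S) k y J : Fin N → ℝ)) a
    = ∑ j ∈ Finset.univ.filter (· ∉ J.1),
        (-1 : ℝ) ^ ((J.1.filter (· < j)).card) * coordOf S y (insert j J.1) a := by
  rw [← Finset.sum_attach (Finset.univ.filter (· ∉ J.1))
    (fun j => (-1 : ℝ) ^ ((J.1.filter (· < j)).card) * coordOf S y (insert j J.1) a)]
  unfold bd
  rw [LinearMap.pi_apply, LinearMap.sum_apply, Submodule.coe_sum, Finset.sum_apply]
  refine Finset.sum_congr rfl fun j hj => ?_
  have hcard : (insert j.1 J.1).card = k + 1 := by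
    have hj' : j.1 ∉ J.1 := (Finset.mem_filter.mp j.2).2
    rw [Finset.card_insert_of_notMem hj', J.2]
  rw [coordOf_eq S y _ hcard]
  simp [Submodule.coe_smul, Pi.smul_apply, smul_eq_mul]

def Ia (a : Fin N) : Finset (Fin n) := Finset.univ.filter (fun i => a ∈ S i)

lemma mem_Ia {a : Fin N} {i : Fin n} : i ∈ Ia S a ↔ a ∈ S i := by simp [Ia]

noncomputable def hcoord {k : ℕ} (x : Ck ℝ (Fin N → ℝ) n (VS S) k) (T : Finset (Fin n))
    (a : Fin N) : ℝ :=
  if hc : (Ia S a).Nonempty then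
    if T ⊆ Ia S a ∧ (Ia S a).min' hc ∈ T then
      (-1 : ℝ) ^ (((T.erase ((Ia S a).min' hc)).filter (· < (Ia S a).min' hc)).card) *
        coordOf S x (T.erase ((Ia S a).min' hc)) a
    else 0
  else 0

lemma hcoord_zero {k : ℕ} (x : Ck ℝ (Fin N → ℝ) n (VS S) k) {T : Finset (Fin n)}
    {j : Fin n} (hj : j ∈ T) {a : Fin N} (ha : a ∉ S j) : hcoord S x T a = 0 := by
  unfold hcoord
  split
  · rw [if_neg]
    rintro ⟨hsub, -⟩
    exact ha (mem_Ia S |>.mp (hsub hj))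
  · rfl

lemma hcoord_add {k : ℕ} (x y : Ck ℝ (Fin N → ℝ) n (VS S) k) (T : Finset (Fin n))
    (a : Fin N) : hcoord S (x + y) T a = hcoord S x T a + hcoord S y T a := by
  unfold hcoord; split <;> [skip; simp]
  split <;> simp [coordOf_add]; ring

lemma hcoord_smul {k : ℕ} (c : ℝ) (x : Ck ℝ (Fin N → ℝ) n (VS S) k) (T : Finset (Fin n))
    (a : Fin N) : hcoord S (c • x) T a = c * hcoord S x T a := by
  unfold hcoord; split <;> [skip; simp]
  split <;> simp [coordOf_smul]; ring

noncomputable def hmap (k : ℕ) :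
    Ck ℝ (Fin N → ℝ) n (VS S) k →ₗ[ℝ] Ck ℝ (Fin N → ℝ) n (VS S) (k + 1) where
  toFun x := fun J' => ⟨fun a => hcoord S x J'.1 a,
    (mem_iInf_VS S J'.1 _).mpr fun j hj a ha => hcoord_zero S x hj ha⟩
  map_add' x y := funext fun J' => Subtype.ext (funext fun a => hcoord_add S x y J'.1 a)
  map_smul' c x := funext fun J' => Subtype.ext (funext fun a => hcoord_smul S c x J'.1 a)

lemma hmap_coord {k : ℕ} (x : Ck ℝ (Fin N → ℝ) n (VS S) k) (T : Finset (Fin n))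
    (h : T.card = k + 1) (a : Fin N) :
    coordOf S (hmap S k x) T a = hcoord S x T a := coordOf_eq S _ T h a

end Setup


section Homotopy

variable {N n : ℕ} (S : Fin n → Finset (Fin N))

lemma homotopy (k : ℕ) (x : Ck ℝ (Fin N → ℝ) n (VS S) (k + 1)) :
    bd ℝ (Fin N → ℝ) n (VS S) (k + 1) (hmap S (k + 1) x)
      + hmap S k (bd ℝ (Fin N → ℝ) n (VS S) k x) = x := by
  funext J
  refine Subtype.ext (funext fun a => ?_)
  have lhs : ((bd ℝ (Fin N → ℝ) n (VS S) (k + 1) (hmap S (k + 1) x)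
      + hmap S k (bd ℝ (Fin N → ℝ) n (VS S) k x)) J : Fin N → ℝ) a
      = ((bd ℝ (Fin N → ℝ) n (VS S) (k + 1) (hmap S (k + 1) x) J : Fin N → ℝ)) a
        + hcoord S (bd ℝ (Fin N → ℝ) n (VS S) k x) J.1 a := by
    rw [show ((bd ℝ (Fin N → ℝ) n (VS S) (k + 1) (hmap S (k + 1) x)
        + hmap S k (bd ℝ (Fin N → ℝ) n (VS S) k x)) J)
      = bd ℝ (Fin N → ℝ) n (VS S) (k + 1) (hmap S (k + 1) x) J
        + hmap S k (bd ℝ (Fin N → ℝ) n (VS S) k x) J from rfl, Submodule.coe_add, Pi.add_apply]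
    rfl
  rw [lhs, bd_coord]
  have hins : ∀ j ∈ Finset.univ.filter (· ∉ J.1), (insert j J.1).card = k + 1 + 1 := by
    intro j hj
    rw [Finset.card_insert_of_notMem (Finset.mem_filter.mp hj).2, J.2]
  rw [Finset.sum_congr rfl (fun j hj => by rw [hmap_coord S x _ (hins j hj)])]
  by_cases hc : (Ia S a).Nonempty
  · set m := (Ia S a).min' hc with hm_def
    have hmIa : m ∈ Ia S a := Finset.min'_mem _ hc
    by_cases hJsub : J.1 ⊆ Ia S a
    · by_cases hmJ : m ∈ J.1
      · -- main case
        have hJe : (J.1.erase m).card = k := by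
          rw [Finset.card_erase_of_mem hmJ, J.2]
          omega
        have h2 : hcoord S (bd ℝ (Fin N → ℝ) n (VS S) k x) J.1 a
            = (-1 : ℝ) ^ (((J.1.erase m).filter (· < m)).card) *
              ((bd ℝ (Fin N → ℝ) n (VS S) k x ⟨J.1.erase m, hJe⟩ : Fin N → ℝ)) a := by
          unfold hcoord
          rw [dif_pos hc, if_pos ⟨hJsub, hmJ⟩, coordOf_eq S _ _ hJe]
        rw [h2, bd_coord]
        have hset : Finset.univ.filter (· ∉ J.1.erase m)
            = insert m (Finset.univ.filter (· ∉ J.1)) := by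
          ext j
          simp only [Finset.mem_filter, Finset.mem_univ, true_and, Finset.mem_insert,
            Finset.mem_erase]
          by_cases hjm : j = m <;> simp [hjm, hmJ]
        have hmni : m ∉ Finset.univ.filter (· ∉ J.1) := by simp [hmJ]
        rw [hset, Finset.sum_insert hmni]
        rw [Finset.insert_erase hmJ]
        have hxJ : coordOf S x J.1 a = (x J : Fin N → ℝ) a := by
          rw [coordOf_eq S x J.1 J.2]
        rw [hxJ, mul_add, ← mul_assoc, ← pow_add, Even.neg_one_pow ⟨_, rfl⟩, one_mul]
        rw [Finset.mul_sum]
        rw [add_comm ((x J : Fin N → ℝ) a), ← add_assoc, ← Finset.sum_add_distrib]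
        rw [Finset.sum_eq_zero, zero_add]
        intro j hj
        have hjJ : j ∉ J.1 := (Finset.mem_filter.mp hj).2
        have hjm : j ≠ m := fun h => hjJ (h ▸ hmJ)
        by_cases hjIa : j ∈ Ia S a
        · have hcond : insert j J.1 ⊆ Ia S a ∧ m ∈ insert j J.1 :=
            ⟨Finset.insert_subset hjIa hJsub, Finset.mem_insert_of_mem hmJ⟩
          have herase : (insert j J.1).erase m = insert j (J.1.erase m) :=
            Finset.erase_insert_of_ne hjm
          have hhc : hcoord S x (insert j J.1) a
              = (-1 : ℝ) ^ (((insert j (J.1.erase m)).filter (· < m)).card) *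
                coordOf S x (insert j (J.1.erase m)) a := by
            unfold hcoord
            rw [dif_pos hc, if_pos hcond, herase]
          rw [hhc]
          have hjem : j ∉ J.1.erase m := fun h => hjJ (Finset.mem_of_mem_erase h)
          have e1 : ((insert j (J.1.erase m)).filter (· < m)).card
              = ((J.1.erase m).filter (· < m)).card + if j < m then 1 else 0 :=
            card_filter_insert_lt _ hjem m
          have e2 : (J.1.filter (· < j)).card
              = ((J.1.erase m).filter (· < j)).card + if m < j then 1 else 0 := by
            conv_lhs => rw [← Finset.insert_erase hmJ]
            exact card_filter_insert_lt _ (Finset.notMem_erase m J.1) j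
          rw [e1, e2]
          rcases lt_or_gt_of_ne hjm with hlt | hgt
          · rw [if_pos hlt, if_neg (asymm hlt)]
            ring_nf
          · rw [if_neg (asymm hgt), if_pos hgt]
            ring_nf
        · have haS : a ∉ S j := fun h => hjIa ((mem_Ia S).mpr h)
          rw [hcoord_zero S x (Finset.mem_insert_self j J.1) haS,
            coordOf_eq_zero S x (Finset.mem_insert_self j _) haS]
          ring
      · -- m ∉ J
        have h2 : hcoord S (bd ℝ (Fin N → ℝ) n (VS S) k x) J.1 a = 0 := by
          unfold hcoord
          rw [dif_pos hc, if_neg (fun h => hmJ h.2)]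
        rw [h2, add_zero]
        have hmmem : m ∈ Finset.univ.filter (· ∉ J.1) := by simp [hmJ]
        rw [Finset.sum_eq_single_of_mem m hmmem]
        · have hhc : hcoord S x (insert m J.1) a
              = (-1 : ℝ) ^ ((J.1.filter (· < m)).card) * coordOf S x J.1 a := by
            unfold hcoord
            rw [dif_pos hc,
              if_pos ⟨Finset.insert_subset hmIa hJsub, Finset.mem_insert_self m _⟩,
              Finset.erase_insert hmJ]
          rw [hhc, coordOf_eq S x J.1 J.2, ← mul_assoc, ← pow_add,
            Even.neg_one_pow ⟨_, rfl⟩, one_mul]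
        · intro j hj hjm
          have hcond : ¬(insert j J.1 ⊆ Ia S a ∧ m ∈ insert j J.1) := by
            rintro ⟨-, hmem⟩
            rcases Finset.mem_insert.mp hmem with h | h
            · exact hjm h.symm
            · exact hmJ h
          have hz : hcoord S x (insert j J.1) a = 0 := by
            unfold hcoord
            rw [dif_pos hc, if_neg hcond]
          rw [hz, mul_zero]
    · -- J ⊄ Ia
      obtain ⟨j0, hj0J, hj0⟩ := Finset.not_subset.mp hJsub
      have haS : a ∉ S j0 := fun h => hj0 ((mem_Ia S).mpr h)
      have hx0 : (x J : Fin N → ℝ) a = 0 :=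
        (mem_iInf_VS S J.1 _).mp (x J).2 j0 hj0J a haS
      rw [hx0]
      have h2 : hcoord S (bd ℝ (Fin N → ℝ) n (VS S) k x) J.1 a = 0 := by
        unfold hcoord
        rw [dif_pos hc, if_neg (fun h => hJsub h.1)]
      rw [h2, add_zero, Finset.sum_eq_zero]
      intro j hj
      have hz : hcoord S x (insert j J.1) a = 0 := by
        unfold hcoord
        rw [dif_pos hc, if_neg]
        rintro ⟨hsub, -⟩
        exact hJsub ((Finset.subset_insert j J.1).trans hsub)
      rw [hz, mul_zero]
  · -- Ia empty
    obtain ⟨j0, hj0⟩ : J.1.Nonempty := Finset.card_pos.mp (by rw [J.2]; omega)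
    have haS : a ∉ S j0 := fun h => hc ⟨j0, (mem_Ia S).mpr h⟩
    have hx0 : (x J : Fin N → ℝ) a = 0 :=
      (mem_iInf_VS S J.1 _).mp (x J).2 j0 hj0 a haS
    have h2 : hcoord S (bd ℝ (Fin N → ℝ) n (VS S) k x) J.1 a = 0 := by
      unfold hcoord; rw [dif_neg hc]
    rw [hx0, h2, add_zero, Finset.sum_eq_zero]
    intro j hj
    have hz : hcoord S x (insert j J.1) a = 0 := by
      unfold hcoord; rw [dif_neg hc]
    rw [hz, mul_zero]

end Homotopy

section Vanish

variable {N n : ℕ} (S : Fin n → Finset (Fin N))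

lemma hk_subsingleton (k : ℕ) (hk : 1 ≤ k) :
    Subsingleton (Hk ℝ (Fin N → ℝ) n (VS S) k) := by
  obtain ⟨k', rfl⟩ : ∃ k', k = k' + 1 := ⟨k - 1, by omega⟩
  rw [Hk, Submodule.Quotient.subsingleton_iff, Submodule.comap_subtype_eq_top]
  show Zk ℝ (Fin N → ℝ) n (VS S) (k' + 1) ≤ LinearMap.range (bd ℝ (Fin N → ℝ) n (VS S) (k' + 1))
  intro x hx
  have hker : bd ℝ (Fin N → ℝ) n (VS S) k' x = 0 := hx
  have := homotopy S k' x
  rw [hker, map_zero, add_zero] at this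
  exact ⟨hmap S (k' + 1) x, this⟩

end Vanish

section DegZero

variable {N n : ℕ} (S : Fin n → Finset (Fin N))

/-- evaluation of the degree-0 chain module -/
noncomputable def ev : Ck ℝ (Fin N → ℝ) n (VS S) 0 →ₗ[ℝ] (Fin N → ℝ) :=
  (Submodule.subtype _).comp
    (LinearMap.proj (φ := fun J : Idx n 0 => ↥(⨅ j ∈ J.1, VS S j)) ⟨∅, rfl⟩)

lemma idx_zero_eq (J : Idx n 0) : J = (⟨∅, rfl⟩ : Idx n 0) :=
  Subtype.ext (Finset.card_eq_zero.mp J.2)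

lemma ev_bijective : Function.Bijective (ev S) := by
  constructor
  · intro x y hxy
    funext J
    rw [idx_zero_eq J]
    exact Subtype.ext (congrArg id hxy)
  · intro v
    refine ⟨fun J => ⟨v, ?_⟩, rfl⟩
    rw [mem_iInf_VS]
    intro j hj
    rw [Finset.card_eq_zero.mp J.2] at hj
    exact absurd hj (Finset.notMem_empty j)

noncomputable def evE : Ck ℝ (Fin N → ℝ) n (VS S) 0 ≃ₗ[ℝ] (Fin N → ℝ) :=
  LinearEquiv.ofBijective (ev S) (ev_bijective S)

lemma ev_bd (y : Ck ℝ (Fin N → ℝ) n (VS S) 1) :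
    ev S (bd ℝ (Fin N → ℝ) n (VS S) 0 y)
      = ∑ j : Fin n, ((y ⟨{j}, Finset.card_singleton j⟩ : Fin N → ℝ)) := by
  funext a
  have : ev S (bd ℝ (Fin N → ℝ) n (VS S) 0 y) a
      = ((bd ℝ (Fin N → ℝ) n (VS S) 0 y ⟨∅, rfl⟩ : Fin N → ℝ)) a := rfl
  rw [this, bd_coord]
  rw [Finset.sum_apply]
  have hfil : (Finset.univ.filter (· ∉ (∅ : Finset (Fin n)))) = Finset.univ := by
    simp
  rw [hfil]
  refine Finset.sum_congr rfl fun j _ => ?_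
  rw [show (insert j (∅ : Finset (Fin n))) = {j} from rfl,
    coordOf_eq S y {j} (Finset.card_singleton j), Finset.filter_empty, Finset.card_empty,
    pow_zero, one_mul]

/-- vertices covered by some member of the arrangement -/
noncomputable def Bset : Finset (Fin N) := Finset.univ.filter (fun a => ∃ i, a ∈ S i)

lemma range_ev_bd : LinearMap.range ((ev S).comp (bd ℝ (Fin N → ℝ) n (VS S) 0))
    = Submodule.span ℝ ((fun a => Pi.single a (1 : ℝ)) '' (Bset S : Set (Fin N))) := by
  apply le_antisymm
  · rintro v ⟨y, rfl⟩
    rw [mem_span_single_iff]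
    intro a ha
    have hall : ∀ i, a ∉ S i := by
      intro i hi
      exact ha (by simp [Bset]; exact ⟨i, hi⟩)
    rw [LinearMap.comp_apply, ev_bd, Finset.sum_apply]
    refine Finset.sum_eq_zero fun j _ => ?_
    exact (mem_iInf_VS S {j} _).mp (y ⟨{j}, Finset.card_singleton j⟩).2 j
      (Finset.mem_singleton_self j) a (hall j)
  · rw [Submodule.span_le]
    rintro v ⟨a, ha, rfl⟩
    obtain ⟨i, hi⟩ : ∃ i, a ∈ S i := by simpa [Bset] using ha
    have hmem : (Pi.single a (1 : ℝ) : Fin N → ℝ) ∈ ⨅ j ∈ ({i} : Finset (Fin n)), VS S j := by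
      rw [mem_iInf_VS]
      intro j hj b hb
      rw [Finset.mem_singleton.mp hj] at hb
      have : a ≠ b := fun h => hb (h ▸ hi)
      simp [Pi.single_apply, this]
    refine ⟨Pi.single (⟨{i}, Finset.card_singleton i⟩ : Idx n 1) ⟨Pi.single a 1, hmem⟩, ?_⟩
    rw [LinearMap.comp_apply, ev_bd]
    rw [Finset.sum_eq_single i]
    · rw [Pi.single_eq_same]
    · intro j _ hj
      have hne : (⟨{j}, Finset.card_singleton j⟩ : Idx n 1)
          ≠ ⟨{i}, Finset.card_singleton i⟩ := by
        simp [Subtype.ext_iff, Finset.singleton_injective.ne_iff, hj]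
      rw [Pi.single_eq_of_ne hne]
      rfl
    · simp

lemma single_linearIndependent :
    LinearIndependent ℝ (fun a : Fin N => (Pi.single a (1 : ℝ) : Fin N → ℝ)) := by
  rw [Fintype.linearIndependent_iff]
  intro g hg a
  have := congrFun hg a
  simpa [Finset.sum_apply, Pi.single_apply, Finset.sum_ite_eq'] using this

lemma finrank_span_B :
    Module.finrank ℝ (Submodule.span ℝ
      ((fun a => Pi.single a (1 : ℝ)) '' (Bset S : Set (Fin N)))) = (Bset S).card := by
  have himg : (fun a => (Pi.single a (1 : ℝ) : Fin N → ℝ)) '' (Bset S : Set (Fin N))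
      = ((Bset S).image (fun a => (Pi.single a (1 : ℝ) : Fin N → ℝ)) : Set (Fin N → ℝ)) := by
    rw [Finset.coe_image]
  have hinj : Function.Injective (fun a : Fin N => (Pi.single a (1 : ℝ) : Fin N → ℝ)) :=
    fun a b hab => by
      by_contra hne
      have := congrFun hab a
      simp [Pi.single_apply, Ne.symm hne] at this
  have hli : LinearIndependent ℝ
      ((↑) : ((Bset S).image (fun a => (Pi.single a (1 : ℝ) : Fin N → ℝ)) : Set (Fin N → ℝ))
        → (Fin N → ℝ)) := by
    refine ((single_linearIndependent (N := N)).linearIndepOn_id).mono ?_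
    rw [Finset.coe_image]
    exact Set.image_subset_range _ _
  rw [himg, finrank_span_finset_eq_card hli, Finset.card_image_of_injective _ hinj]

set_option maxHeartbeats 1000000 in
set_option synthInstance.maxHeartbeats 1000000 in
lemma finrank_Hk0 :
    Module.finrank ℝ (Hk ℝ (Fin N → ℝ) n (VS S) 0) = N - (Bset S).card := by
  classical
  set W := LinearMap.range (bd ℝ (Fin N → ℝ) n (VS S) 0) with hW
  have hC0 : Module.finrank ℝ (Ck ℝ (Fin N → ℝ) n (VS S) 0) = N := by
    rw [(evE S).finrank_eq, Module.finrank_fintype_fun_eq_card, Fintype.card_fin]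
  have hmap' : W.map ((evE S) : Ck ℝ (Fin N → ℝ) n (VS S) 0 →ₗ[ℝ] (Fin N → ℝ)) = LinearMap.range ((ev S).comp (bd ℝ (Fin N → ℝ) n (VS S) 0)) := by
    rw [LinearMap.range_comp]
    rfl
  have hWrank : Module.finrank ℝ W = (Bset S).card := by
    rw [← (evE S).finrank_map_eq W, hmap', range_ev_bd, finrank_span_B]
  have hq := Submodule.finrank_quotient_add_finrank
    (Submodule.comap (Zk ℝ (Fin N → ℝ) n (VS S) 0).subtype W)
  have hcomap : Module.finrank ℝ
      (Submodule.comap (Zk ℝ (Fin N → ℝ) n (VS S) 0).subtype W) = (Bset S).card := by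
    rw [← hWrank]
    exact (Submodule.comapSubtypeEquivOfLe (p := W)
      (q := Zk ℝ (Fin N → ℝ) n (VS S) 0) le_top).finrank_eq
  have htop : Module.finrank ℝ (↥(Zk ℝ (Fin N → ℝ) n (VS S) 0)) = N := by
    rw [show Zk ℝ (Fin N → ℝ) n (VS S) 0 = ⊤ from rfl, finrank_top, hC0]
  have hle : (Bset S).card ≤ N := by
    calc (Bset S).card = Module.finrank ℝ W := hWrank.symm
    _ ≤ Module.finrank ℝ (Ck ℝ (Fin N → ℝ) n (VS S) 0) := W.finrank_le
    _ = N := hC0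
  rw [hcomap, htop] at hq
  have hHk : Module.finrank ℝ (Hk ℝ (Fin N → ℝ) n (VS S) 0)
      = Module.finrank ℝ
        (↥(Zk ℝ (Fin N → ℝ) n (VS S) 0) ⧸
          Submodule.comap (Zk ℝ (Fin N → ℝ) n (VS S) 0).subtype W) := rfl
  rw [hHk]
  omega

end DegZero

section Graph

variable {N : ℕ} (Γ : SimpleGraph (Fin N)) [DecidableRel Γ.Adj]

lemma central_iff {n : ℕ} (S : Fin n → Finset (Fin N))
    (hS : ∀ T : Finset (Fin N), (∃ i, S i = T) ↔
      (¬ (Γ.induce (T : Set (Fin N))).Preconnected ∧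
        ∀ T' : Finset (Fin N), T ⊆ T' →
          ¬ (Γ.induce (T' : Set (Fin N))).Preconnected → T = T'))
    (a : Fin N) : (∀ b, b ≠ a → Γ.Adj a b) ↔ ¬∃ i, a ∈ S i := by
  constructor
  · rintro hcen ⟨i, hi⟩
    have hdis := ((hS (S i)).mp ⟨i, rfl⟩).1
    apply hdis
    have key : ∀ u : ↑((S i : Set (Fin N))),
        (Γ.induce (S i : Set (Fin N))).Reachable u ⟨a, hi⟩ := by
      intro u
      by_cases hu : u.1 = a
      · rw [show u = ⟨a, hi⟩ from Subtype.ext hu]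
      · apply SimpleGraph.Adj.reachable
        show Γ.Adj u.1 a
        exact Γ.adj_symm (hcen u.1 hu)
    intro u v
    exact (key u).trans (key v).symm
  · intro hnot
    by_contra hne
    push_neg at hne
    obtain ⟨b, hba, hnadj⟩ := hne
    classical
    have hbot : Γ.induce (({a, b} : Finset (Fin N)) : Set (Fin N)) = ⊥ := by
      ext u v
      simp only [SimpleGraph.comap_adj, SimpleGraph.bot_adj, iff_false]
      intro hadj
      have h1 : Γ.Adj u.1 v.1 := hadj
      have hu : u.1 = a ∨ u.1 = b := by
        have := u.2; simpa using this
      have hv : v.1 = a ∨ v.1 = b := by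
        have := v.2; simpa using this
      rcases hu with hu | hu <;> rcases hv with hv | hv
      · exact Γ.irrefl (by rwa [hu, hv] at h1)
      · exact hnadj (by rwa [hu, hv] at h1)
      · exact hnadj (Γ.adj_symm (by rwa [hu, hv] at h1))
      · exact Γ.irrefl (by rwa [hu, hv] at h1)
    have hdis0 : ¬(Γ.induce (({a, b} : Finset (Fin N)) : Set (Fin N))).Preconnected := by
      intro hpre
      have hab : a ∈ (({a, b} : Finset (Fin N)) : Set (Fin N)) := by simp
      have hbb : b ∈ (({a, b} : Finset (Fin N)) : Set (Fin N)) := by simp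
      have := hpre ⟨a, hab⟩ ⟨b, hbb⟩
      rw [hbot, SimpleGraph.reachable_bot] at this
      exact hba (congrArg Subtype.val this).symm
    set P : Finset (Fin N) → Prop := fun T =>
      ({a, b} : Finset (Fin N)) ⊆ T ∧ ¬(Γ.induce (T : Set (Fin N))).Preconnected with hP
    let F : Finset (Finset (Fin N)) := Finset.univ.filter P
    have hFmem : ({a, b} : Finset (Fin N)) ∈ F :=
      Finset.mem_filter.mpr ⟨Finset.mem_univ _, Finset.Subset.refl _, hdis0⟩
    obtain ⟨T, hTF, hTmax⟩ := F.exists_max_image Finset.card ⟨_, hFmem⟩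
    have hPT : P T := (Finset.mem_filter.mp hTF).2
    have hmax : ∃ i, S i = T := (hS T).mpr ⟨hPT.2, fun T' hTT' hT'dis =>
      Finset.eq_of_subset_of_card_le hTT' (hTmax T'
        (Finset.mem_filter.mpr ⟨Finset.mem_univ _, hPT.1.trans hTT', hT'dis⟩))⟩
    obtain ⟨i, hi⟩ := hmax
    exact hnot ⟨i, by rw [hi]; exact hPT.1 (Finset.mem_insert_self a {b})⟩

end Graph

/-- Let `G = A_Γ` be the RAAG on a finite graph `Γ`, identify `Hom(G; ℝ)` with
`Fin N → ℝ` via the dual basis `{χ_a}` of the vertex generators, and let `𝒱_G` consist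
of the coordinate subspaces `V_S = ⟨χ_a : a ∈ S⟩` for `S` ranging (injectively, via the
enumeration `S : Fin n → Finset (Fin N)`) over the maximal vertex subsets inducing a
disconnected subgraph of `Γ`.  Then `dim H_0(V, 𝒱_G)` equals the number of vertices of
`Γ` adjacent to every other vertex (the rank of the center of `A_Γ`), and
`H_k(V, 𝒱_G) = 0` for all `k ≥ 1`. -/
theorem raag_bns_homology (N : ℕ) (Γ : SimpleGraph (Fin N)) [DecidableRel Γ.Adj]
    (n : ℕ) (S : Fin n → Finset (Fin N)) (hinj : Function.Injective S)
    (hS : ∀ T : Finset (Fin N), (∃ i, S i = T) ↔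
      (¬ (Γ.induce (T : Set (Fin N))).Preconnected ∧
        ∀ T' : Finset (Fin N), T ⊆ T' →
          ¬ (Γ.induce (T' : Set (Fin N))).Preconnected → T = T')) :
    let 𝒱 : Fin n → Submodule ℝ (Fin N → ℝ) :=
      fun i => Submodule.span ℝ ((fun a => Pi.single a (1 : ℝ)) '' (S i : Set (Fin N)))
    Module.finrank ℝ (Hk ℝ (Fin N → ℝ) n 𝒱 0)
        = (Finset.univ.filter fun a : Fin N => ∀ b, b ≠ a → Γ.Adj a b).card ∧
      ∀ k, 1 ≤ k → Subsingleton (Hk ℝ (Fin N → ℝ) n 𝒱 k) := by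
  intro 𝒱
  constructor
  · have h0 : Module.finrank ℝ (Hk ℝ (Fin N → ℝ) n 𝒱 0) = N - (Bset S).card :=
      finrank_Hk0 S
    rw [h0]
    have hsplit := Finset.card_filter_add_card_filter_not
      (s := (Finset.univ : Finset (Fin N))) (p := fun a => ∃ i, a ∈ S i)
    have hcongr : (Finset.univ.filter fun a : Fin N => ¬∃ i, a ∈ S i)
        = (Finset.univ.filter fun a : Fin N => ∀ b, b ≠ a → Γ.Adj a b) :=
      Finset.filter_congr fun a _ => (central_iff Γ S hS a).symm
    rw [hcongr] at hsplit
    have hB : (Bset S).card = (Finset.univ.filter fun a : Fin N => ∃ i, a ∈ S i).card := rfl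
    rw [Finset.card_univ, Fintype.card_fin] at hsplit
    omega
  · intro k hk
    exact hk_subsingleton S k hk

end Arrangement
end
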